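/- arXiv:1611.03919 — 2 statements merged into one kernel-verified Lean document; each statement's English description precedes it below -/
import Mathlib

section
/- Let a, d ∈ ℕ with a ≥ 1, d ≥ 1, and gcd(a, d) = 1. If x ∈ ℕ satisfies x ≤ a, then for every k ∈ ℕ the iterate satisfies T_{a,d}^(k)(x) ≤ a·d. -/
/-!
Call `y` trapped if adding `a` to it some number of times lands on a multiple of `d` that is at
most `a * d`. Since `a` is invertible modulo `d`, every `y ≤ a` is trapped, with fewer than `d`
additions. A trapped `y` stays trapped under `T_{a,d}`: if `d ∤ y` then `y + a` needs one addition
fewer, and if `d ∣ y` then `y ≤ a * d` gives `y / d ≤ a`. Trapped values are at most `a * d`.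
-/

/-- The additive Collatz function `T_{a,d}`. -/
def addCollatz (a d : ℕ) (x : ℕ) : ℕ := if d ∣ x then x / d else x + a

def AddCollatzTrapped (a d y : ℕ) : Prop := ∃ j, d ∣ y + j * a ∧ y + j * a ≤ a * d

theorem Nat.exists_lt_dvd_add_mul_of_coprime {a d : ℕ} (hcop : a.Coprime d) (hd : 0 < d)
    (y : ℕ) : ∃ j < d, d ∣ y + j * a := by
  have : NeZero d := ⟨hd.ne'⟩
  set j := (-(y : ZMod d) * (a : ZMod d)⁻¹).val
  refine ⟨j, ZMod.val_lt _, (ZMod.natCast_eq_zero_iff _ _).mp ?_⟩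
  push_cast [j, ZMod.natCast_zmod_val]
  linear_combination (-(y : ZMod d)) * ZMod.coe_mul_inv_eq_one a hcop

namespace AddCollatzTrapped

variable {a d y : ℕ}

theorem of_le (hcop : a.Coprime d) (hd : 0 < d) (hy : y ≤ a) : AddCollatzTrapped a d y := by
  obtain ⟨j, hjd, hdvd⟩ := Nat.exists_lt_dvd_add_mul_of_coprime hcop hd y
  refine ⟨j, hdvd, ?_⟩
  calc y + j * a ≤ (j + 1) * a := by nlinarith
    _ ≤ d * a := Nat.mul_le_mul_right a hjd
    _ = a * d := Nat.mul_comm d a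

theorem le (h : AddCollatzTrapped a d y) : y ≤ a * d := by
  obtain ⟨j, -, hle⟩ := h
  omega

theorem addCollatz (hcop : a.Coprime d) (hd : 0 < d) (h : AddCollatzTrapped a d y) :
    AddCollatzTrapped a d (addCollatz a d y) := by
  unfold _root_.addCollatz
  split_ifs with hdy
  · refine of_le hcop hd ?_
    calc y / d ≤ a * d / d := Nat.div_le_div_right h.le
      _ = a := Nat.mul_div_cancel a hd
  · obtain ⟨_ | j, hdvd, hle⟩ := h
    · exact absurd (by simpa using hdvd) hdy
    · exact ⟨j, by convert hdvd using 1; ring, by linarith⟩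

theorem iterate_addCollatz (hcop : a.Coprime d) (hd : 0 < d) (h : AddCollatzTrapped a d y)
    (k : ℕ) : AddCollatzTrapped a d ((_root_.addCollatz a d)^[k] y) :=
  Function.Iterate.rec _ h (fun _ hz => hz.addCollatz hcop hd) k

end AddCollatzTrapped

theorem stmt_4_general (a d x : ℕ) (hd : 1 ≤ d) (hcop : Nat.gcd a d = 1)
    (hx : x ≤ a) : ∀ k : ℕ, (addCollatz a d)^[k] x ≤ a * d := fun k =>
  ((AddCollatzTrapped.of_le hcop hd hx).iterate_addCollatz hcop hd k).le

theorem stmt_4 (a d x : ℕ) (ha : 1 ≤ a) (hd : 1 ≤ d) (hcop : Nat.gcd a d = 1)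
    (hx : x ≤ a) : ∀ k : ℕ, (addCollatz a d)^[k] x ≤ a * d :=
  stmt_4_general a d x hd hcop hx
end

section
/- Let a, d ∈ ℕ with a ≥ 1, d ≥ 2, and gcd(a, d) = 1. Then for every x ∈ ℕ there exists y ∈ ℕ with y ≤ a such that x and y are orbit equivalent, i.e., there exist n₁, n₂ ∈ ℕ such that for all k ∈ ℕ, T_{a,d}^(k+n₁)(x) = T_{a,d}^(k+n₂)(y). -/
def OrbitEquiv {α : Type*} (f : α → α) (x y : α) : Prop :=
  ∃ n₁ n₂ : ℕ, ∀ k : ℕ, f^[k + n₁] x = f^[k + n₂] y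

namespace OrbitEquiv

variable {α : Type*} {f : α → α}

theorem refl (x : α) : OrbitEquiv f x x := ⟨0, 0, fun _ => rfl⟩

theorem of_iterate {x y : α} (m : ℕ) (h : OrbitEquiv f (f^[m] x) y) : OrbitEquiv f x y := by
  obtain ⟨n₁, n₂, h⟩ := h
  refine ⟨n₁ + m, n₂, fun k => ?_⟩
  rw [← add_assoc, Function.iterate_add_apply]
  exact h k

end OrbitEquiv

theorem exists_le_orbitEquiv_of_exists_iterate_lt {f : ℕ → ℕ} {b : ℕ}
    (hdrop : ∀ x, b < x → ∃ m, f^[m] x < x) (x : ℕ) : ∃ y ≤ b, OrbitEquiv f x y := by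
  induction x using Nat.strong_induction_on with
  | _ x ih =>
    by_cases hx : x ≤ b
    · exact ⟨x, hx, OrbitEquiv.refl x⟩
    · obtain ⟨m, hm⟩ := hdrop x (not_le.mp hx)
      obtain ⟨y, hy, hxy⟩ := ih _ hm
      exact ⟨y, hy, hxy.of_iterate m⟩

theorem exists_lt_dvd_add_mul {a d : ℕ} [NeZero d] (hcop : a.Coprime d) (x : ℕ) :
    ∃ j < d, d ∣ x + j * a := by
  set j := (-(x : ZMod d) * (a : ZMod d)⁻¹).val
  refine ⟨j, ZMod.val_lt _, (ZMod.natCast_eq_zero_iff _ _).mp ?_⟩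
  push_cast
  rw [ZMod.natCast_zmod_val, mul_assoc, ZMod.inv_mul_of_unit _ ((ZMod.isUnit_iff_coprime a d).mpr hcop)]
  ring

section addCollatz

variable {a d : ℕ}

theorem iterate_addCollatz_of_forall_not_dvd {x j : ℕ} (h : ∀ i < j, ¬ d ∣ x + i * a) :
    (addCollatz a d)^[j] x = x + j * a := by
  induction j with
  | zero => simp
  | succ n ih =>
    rw [Function.iterate_succ_apply', ih fun i hi => h i (by omega), addCollatz,
      if_neg (h n n.lt_succ_self)]
    ring

theorem exists_iterate_addCollatz_lt (hd : 2 ≤ d) (hcop : a.Coprime d) {x : ℕ} (hx : a < x) :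
    ∃ m, (addCollatz a d)^[m] x < x := by
  have : NeZero d := ⟨by omega⟩
  obtain ⟨j₀, hj₀d, hj₀⟩ := exists_lt_dvd_add_mul hcop x
  classical
  have hex : ∃ j, d ∣ x + j * a := ⟨j₀, hj₀⟩
  have hjd : Nat.find hex + 1 ≤ d := (Nat.find_min' hex hj₀).trans_lt hj₀d
  refine ⟨Nat.find hex + 1, ?_⟩
  rw [Function.iterate_succ_apply',
    iterate_addCollatz_of_forall_not_dvd fun i hi => Nat.find_min hex hi, addCollatz,
    if_pos (Nat.find_spec hex), Nat.div_lt_iff_lt_mul (by omega)]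
  nlinarith [Nat.mul_le_mul_right a hjd]

end addCollatz

theorem stmt_9_general (a d : ℕ) (hd : 2 ≤ d) (hcop : Nat.gcd a d = 1) :
    ∀ x : ℕ, ∃ y : ℕ, y ≤ a ∧ ∃ (n₁ n₂ : ℕ), ∀ k : ℕ,
      (addCollatz a d)^[k + n₁] x = (addCollatz a d)^[k + n₂] y :=
  exists_le_orbitEquiv_of_exists_iterate_lt fun _ => exists_iterate_addCollatz_lt hd hcop

theorem stmt_9 (a d : ℕ) (ha : 1 ≤ a) (hd : 2 ≤ d) (hcop : Nat.gcd a d = 1) :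
    ∀ x : ℕ, ∃ y : ℕ, y ≤ a ∧ ∃ (n₁ n₂ : ℕ), ∀ k : ℕ,
      (addCollatz a d)^[k + n₁] x = (addCollatz a d)^[k + n₂] y :=
  stmt_9_general a d hd hcop
end
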